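/- arXiv:2512.17663 — 3 statements merged into one kernel-verified Lean document; each statement's English description precedes it below -/
import Mathlib

section
/- Consider n jobs with release times r_1 ≤ ... ≤ r_n processed without preemption in order 1, 2, ..., n (job j completes before job j+1 starts). For a schedule σ assigning each job j a processing time x_j > 0 and hence completion times, define 'j affects j'' transitively from the base relation C_j ≤ C_{j'} and C_j > r_{j'}. Then for every job j, the set of jobs affected by j together with j itself forms a contiguous interval {j, j+1, ..., j+ℓ} for some ℓ ≥ 0. -/
/-!
Since every job has positive length and the jobs run in index order, completion times are
strictly increasing, so a job can only affect jobs of larger or equal index. If `a` directly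
affects `b`, it directly affects every `k` between them: `C a ≤ C k` by monotonicity of `C`,
and `r k ≤ r b < C a` by monotonicity of `r`. Hence the set of jobs reachable from `j` is
closed under going down to `j`, and in a finite order such a set is an interval `[j, m]`.
-/

open Set Relation

section TransGen

variable {α : Type*} [LinearOrder α] {R : α → α → Prop}

theorem Relation.TransGen.of_mem_Icc (hR : ∀ a b k, R a b → k ∈ Icc a b → R a k)
    {j b k : α} (h : TransGen R j b) (hk : k ∈ Icc j b) : TransGen R j k := by
  induction h generalizing k with
  | single hjb => exact .single (hR _ _ _ hjb hk)
  | @tail a b hja hab ih =>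
    rcases le_or_gt k a with hka | hak
    · exact ih ⟨hk.1, hka⟩
    · exact .tail hja (hR _ _ _ hab ⟨hak.le, hk.2⟩)

theorem exists_insert_setOf_transGen_eq_Icc [Finite α] (hle : ∀ a b, R a b → a ≤ b)
    (hR : ∀ a b k, R a b → k ∈ Icc a b → R a k) (j : α) :
    ∃ m, j ≤ m ∧ insert j {b | TransGen R j b} = Icc j m := by
  set A := insert j {b | TransGen R j b}
  have hge : ∀ b ∈ A, j ≤ b := by
    rintro b (rfl | hb)
    exacts [le_rfl, transGen_minimal hle _ _ hb]
  obtain ⟨m, hmA, hmax⟩ := A.exists_max_image id A.toFinite ⟨j, mem_insert j _⟩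
  refine ⟨m, hge m hmA, Subset.antisymm (fun b hb => ⟨hge b hb, hmax b hb⟩) ?_⟩
  intro k hk
  rcases hmA with rfl | hjm
  · exact Or.inl (le_antisymm hk.2 hk.1)
  · exact Or.inr (hjm.of_mem_Icc hR hk)

end TransGen

theorem Fin.strictMono_of_lt_succ {β : Type*} [Preorder β] {n : ℕ} {f : Fin n → β}
    (h : ∀ (i : Fin n) (hi : (i : ℕ) + 1 < n), f i < f ⟨i + 1, hi⟩) : StrictMono f := by
  cases n with
  | zero => exact fun a => a.elim0
  | succ n => exact Fin.strictMono_iff_lt_succ.2 fun i => h i.castSucc (by simp)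

theorem stmt_9_general (n : ℕ) (r x S C : Fin n → ℝ)
    (hr : Monotone r) (hx : ∀ j, 0 < x j)
    (hC : ∀ j, C j = S j + x j)
    (hseq : ∀ j : Fin n, ∀ h : (j : ℕ) + 1 < n, C j ≤ S ⟨(j : ℕ) + 1, h⟩)
    (j : Fin n) :
    ∃ m : Fin n, j ≤ m ∧
      insert j {j' | Relation.TransGen (fun a b => C a ≤ C b ∧ r b < C a) j j'}
        = Set.Icc j m := by
  have hCmono : StrictMono C := Fin.strictMono_of_lt_succ fun i hi =>
    (hseq i hi).trans_lt (by linarith [hC ⟨i + 1, hi⟩, hx ⟨i + 1, hi⟩])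
  refine exists_insert_setOf_transGen_eq_Icc (fun a b hab => hCmono.le_iff_le.1 hab.1) ?_ j
  rintro a b k ⟨-, hrb⟩ ⟨hak, hkb⟩
  exact ⟨hCmono.monotone hak, (hr hkb).trans_lt hrb⟩

/-- For `n` jobs with nondecreasing release times `r`, processed
non-preemptively in index order (job `j` starts at `S j ≥ r j`, has processing
time `x j > 0`, completes at `C j = S j + x j`, and job `j+1` starts no earlier
than `C j`), the set of jobs affected by `j` (transitive closure of the base
relation `C_j ≤ C_{j'} ∧ C_j > r_{j'}`) together with `j` is a contiguous
interval `{j, j+1, ..., m}` of indices. -/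
theorem stmt_9 (n : ℕ) (r x S C : Fin n → ℝ)
    (hr : Monotone r) (hx : ∀ j, 0 < x j) (hrS : ∀ j, r j ≤ S j)
    (hC : ∀ j, C j = S j + x j)
    (hseq : ∀ j : Fin n, ∀ h : (j : ℕ) + 1 < n, C j ≤ S ⟨(j : ℕ) + 1, h⟩)
    (j : Fin n) :
    ∃ m : Fin n, j ≤ m ∧
      insert j {j' | Relation.TransGen (fun a b => C a ≤ C b ∧ r b < C a) j j'}
        = Set.Icc j m :=
  stmt_9_general n r x S C hr hx hC hseq j
end

section
/- In the setting of non-preemptive FIFO schedules of unit-weight jobs indexed 1,...,n by nondecreasing release time (completing in index order), let σ and σ' be two schedules and j_1 < j_2 two jobs. If in σ the affection chains of j_1 and j_2 coincide (j_1 and j_2 belong to the same maximal affection chain), then κ_{j_1}(σ) − κ_{j_1}(σ') ≥ κ_{j_2}(σ) − κ_{j_2}(σ'), where κ_j denotes the cardinality of the affection set of j. -/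
/-!
In a FIFO schedule completion times increase with the index, so every job affects only later
jobs, and affection can be "cut": if `j₁` affects `k` and `j₁ ≤ j₂ ≤ k`, then `j₂` affects `k`;
if moreover releases are sorted, `j₁` affects everything between itself and `k`. Hence the
affection set `K_j` is an interval `[j, j*]`, and when `j₁` affects `j₂` we get
`K_{j₁} = [j₁, j₂) ⊔ K_{j₂}`, while in any other schedule only `K'_{j₁} ⊆ [j₁, j₂) ∪ K'_{j₂}`.
Subtracting the cardinalities gives the claim.
-/

/-- `j` affects `j'`: transitive closure of `C j ≤ C j' ∧ r j' < C j`. -/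
def affects {n : ℕ} (r C : Fin n → ℝ) (j j' : Fin n) : Prop :=
  Relation.TransGen (fun a b => C a ≤ C b ∧ r b < C a) j j'

/-- `κ_j`: the cardinality of the affection set of `j` (which contains `j`). -/
noncomputable def kappa {n : ℕ} (r C : Fin n → ℝ) (j : Fin n) : ℕ :=
  (insert j {j' | affects r C j j'}).ncard

def affectionSet {n : ℕ} (r C : Fin n → ℝ) (j : Fin n) : Set (Fin n) :=
  insert j {j' | affects r C j j'}

lemma kappa_eq_ncard_affectionSet {n : ℕ} (r C : Fin n → ℝ) (j : Fin n) :
    kappa r C j = (affectionSet r C j).ncard :=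
  rfl

lemma strictMono_of_completion {n : ℕ} {x S C : Fin n → ℝ} (hx : ∀ j, 0 < x j)
    (hC : ∀ j, C j = S j + x j)
    (hseq : ∀ j : Fin n, ∀ h : (j : ℕ) + 1 < n, C j ≤ S ⟨(j : ℕ) + 1, h⟩) :
    StrictMono C := by
  cases n with
  | zero => exact fun a => a.elim0
  | succ m =>
    refine Fin.strictMono_iff_lt_succ.mpr fun i => ?_
    have hnext : C i.castSucc ≤ S i.succ := hseq i.castSucc (by simp)
    linarith [hx i.succ, hC i.succ]

section Affects

variable {n : ℕ} {r C : Fin n → ℝ}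

lemma affects.le (hC : StrictMono C) {j k : Fin n} (h : affects r C j k) : j ≤ k :=
  Relation.transGen_minimal (r' := (· ≤ ·)) (fun _ _ hab => hC.le_iff_le.mp hab.1) _ _ h

lemma affects.of_le_left (hC : StrictMono C) {j₁ j₂ k : Fin n} (h : affects r C j₁ k)
    (h₁₂ : j₁ ≤ j₂) (h₂k : j₂ ≤ k) : affects r C j₂ k := by
  induction h using Relation.TransGen.head_induction_on with
  | single hd =>
    exact .single ⟨hC.monotone h₂k, hd.2.trans_le (hC.monotone h₁₂)⟩
  | @head j₁ m hd hmk ih =>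
    rcases le_or_gt m j₂ with hm | hm
    · exact ih hm
    · exact .head ⟨hC.monotone hm.le, hd.2.trans_le (hC.monotone h₁₂)⟩ hmk

lemma affects.of_le_right (hr : Monotone r) (hC : StrictMono C) {j c k : Fin n}
    (h : affects r C j k) (hjc : j ≤ c) (hck : c ≤ k) : affects r C j c := by
  induction h using Relation.TransGen.head_induction_on with
  | single hd => exact .single ⟨hC.monotone hjc, (hr hck).trans_lt hd.2⟩
  | @head j m hd _ ih =>
    rcases le_or_gt c m with hcm | hcm
    · exact .single ⟨hC.monotone hjc, (hr hcm).trans_lt hd.2⟩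
    · exact (ih hcm.le).head hd

lemma affectionSet_subset_Ici (hC : StrictMono C) (j : Fin n) :
    affectionSet r C j ⊆ Set.Ici j := by
  rintro k (rfl | hk)
  exacts [le_refl k, affects.le hC hk]

lemma affectionSet_subset_Ico_union (hC : StrictMono C) {j₁ j₂ : Fin n} (h : j₁ ≤ j₂) :
    affectionSet r C j₁ ⊆ Set.Ico j₁ j₂ ∪ affectionSet r C j₂ := by
  intro k hk
  rcases lt_or_ge k j₂ with hk₂ | hk₂
  · exact .inl ⟨affectionSet_subset_Ici hC j₁ hk, hk₂⟩
  · rcases hk with rfl | hk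
    · exact .inr (.inl (le_antisymm h hk₂))
    · exact .inr (.inr (hk.of_le_left hC h hk₂))

lemma affectionSet_eq_Ico_union (hr : Monotone r) (hC : StrictMono C) {j₁ j₂ : Fin n}
    (h : affects r C j₁ j₂) :
    affectionSet r C j₁ = Set.Ico j₁ j₂ ∪ affectionSet r C j₂ := by
  refine (affectionSet_subset_Ico_union hC (h.le hC)).antisymm ?_
  rintro k (⟨hjk, hk₂⟩ | rfl | hk)
  · rcases hjk.eq_or_lt with rfl | hjk
    · exact .inl rfl
    · exact .inr (h.of_le_right hr hC hjk.le hk₂.le)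
  · exact .inr h
  · exact .inr (h.trans hk)

lemma kappa_le_ncard_Ico_add (hC : StrictMono C) {j₁ j₂ : Fin n} (h : j₁ ≤ j₂) :
    kappa r C j₁ ≤ (Set.Ico j₁ j₂).ncard + kappa r C j₂ :=
  (Set.ncard_le_ncard (affectionSet_subset_Ico_union hC h) (Set.toFinite _)).trans
    (Set.ncard_union_le _ _)

lemma kappa_eq_ncard_Ico_add (hr : Monotone r) (hC : StrictMono C) {j₁ j₂ : Fin n}
    (h : affects r C j₁ j₂) :
    kappa r C j₁ = (Set.Ico j₁ j₂).ncard + kappa r C j₂ := by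
  have hdisj : Disjoint (Set.Ico j₁ j₂) (affectionSet r C j₂) :=
    Set.disjoint_left.mpr fun _ hk hk₂ => (affectionSet_subset_Ici hC j₂ hk₂).not_gt hk.2
  rw [kappa_eq_ncard_affectionSet, affectionSet_eq_Ico_union hr hC h,
    Set.ncard_union_eq hdisj (Set.toFinite _) (Set.toFinite _)]
  rfl

end Affects

theorem stmt_10_general (n : ℕ) (r : Fin n → ℝ) (hr : Monotone r)
    (x S C x' S' C' : Fin n → ℝ)
    (hx : ∀ j, 0 < x j) (hC : ∀ j, C j = S j + x j)
    (hseq : ∀ j : Fin n, ∀ h : (j : ℕ) + 1 < n, C j ≤ S ⟨(j : ℕ) + 1, h⟩)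
    (hx' : ∀ j, 0 < x' j) (hC' : ∀ j, C' j = S' j + x' j)
    (hseq' : ∀ j : Fin n, ∀ h : (j : ℕ) + 1 < n, C' j ≤ S' ⟨(j : ℕ) + 1, h⟩)
    (j1 j2 : Fin n)
    (hchain : affects r C j1 j2) :
    (kappa r C j1 : ℤ) - (kappa r C' j1 : ℤ)
      ≥ (kappa r C j2 : ℤ) - (kappa r C' j2 : ℤ) := by
  have hCm := strictMono_of_completion hx hC hseq
  have hCm' := strictMono_of_completion hx' hC' hseq'
  have hσ := kappa_eq_ncard_Ico_add hr hCm hchain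
  have hσ' := kappa_le_ncard_Ico_add (r := r) hCm' (hchain.le hCm)
  omega

/-- for two non-preemptive FIFO schedules `σ` (given by `x, S, C`)
and `σ'` (given by `x', S', C'`) of the same unit-weight jobs, if `j₁ < j₂`
belong to the same maximal affection chain of `σ` (equivalently, `j₁` affects
`j₂` in `σ`), then `κ_{j₁}(σ) − κ_{j₁}(σ') ≥ κ_{j₂}(σ) − κ_{j₂}(σ')`. -/
theorem stmt_10 (n : ℕ) (r : Fin n → ℝ) (hr : Monotone r)
    (x S C x' S' C' : Fin n → ℝ)
    (hx : ∀ j, 0 < x j) (hrS : ∀ j, r j ≤ S j) (hC : ∀ j, C j = S j + x j)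
    (hseq : ∀ j : Fin n, ∀ h : (j : ℕ) + 1 < n, C j ≤ S ⟨(j : ℕ) + 1, h⟩)
    (hx' : ∀ j, 0 < x' j) (hrS' : ∀ j, r j ≤ S' j) (hC' : ∀ j, C' j = S' j + x' j)
    (hseq' : ∀ j : Fin n, ∀ h : (j : ℕ) + 1 < n, C' j ≤ S' ⟨(j : ℕ) + 1, h⟩)
    (j1 j2 : Fin n) (hlt : j1 < j2)
    (hchain : affects r C j1 j2) :
    (kappa r C j1 : ℤ) - (kappa r C' j1 : ℤ)
      ≥ (kappa r C j2 : ℤ) - (kappa r C' j2 : ℤ) :=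
  stmt_10_general n r hr x S C x' S' C' hx hC hseq hx' hC' hseq' j1 j2 hchain
end

section
/- Consider the linear program over variables (Ĉ_1,...,Ĉ_n, λ_j^i for j ∈ {1..n}, i ∈ {1..k}): minimize Σ_j w_j·Ĉ_j + Σ_{i,j} λ_j^i·E_j^i subject to Ĉ_j ≥ Ĉ_{j−1} for j > 1; Ĉ_j ≥ r_{j'} + Σ_{j'' ≤ j, r_{j''} ≥ r_{j'}} Σ_i λ_{j''}^i·x_{j''}^i for every j and every j' ≤ j with r_{j'} ≤ r_j; Σ_i λ_j^i = 1; λ_j^i ≥ 0. Then for any feasible schedule σ respecting the completion ordering 1 ≺ ... ≺ n, there is a feasible LP solution with Ĉ_j = Ĉ_j(σ), Σ_i λ_j^i·x_j^i = x_j(σ), and Σ_i λ_j^i·E_j^i = E_j(σ) for all j. -/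
/-!
Let `a j i` be the time the schedule spends on job `j` at speed `s i`. Splitting the busy set of
`j` by speed gives `v j = ∑ i, s i * a j i`, `x_j(σ) = ∑ i, a j i` and `E_j(σ) = ∑ i, P i * a j i`,
so `λ j i = s i * a j i / v j` is a convex combination reproducing `x_j(σ)` and `E_j(σ)`.
Monotonicity of `C` gives `Ĉ = C`. For the interval constraint, the jobs `j'' ≤ j` released no
earlier than `r j'` run on disjoint subsets of `[r j', C j]`, so their processing times add up to
at most `C j - r j'`.
-/

open MeasureTheory Set Function

theorem iUnion_inter_preimage_singleton {α ι : Type*} (S : Set α) (g : α → ι) :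
    ⋃ i, S ∩ g ⁻¹' {i} = S := by
  ext t; simp

section Fibers

variable {α ι : Type*} [MeasurableSpace α] {μ : Measure α} {S : Set α} {g : α → ι}

theorem MeasurableSet.of_inter_preimage_singleton [Countable ι]
    (hm : ∀ i, MeasurableSet (S ∩ g ⁻¹' {i})) : MeasurableSet S :=
  iUnion_inter_preimage_singleton S g ▸ MeasurableSet.iUnion hm

theorem setIntegral_comp_eq_sum_measureReal [Fintype ι]
    (hm : ∀ i, MeasurableSet (S ∩ g ⁻¹' {i})) (hS : μ S ≠ ⊤) (f : ι → ℝ) :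
    ∫ t in S, f (g t) ∂μ = ∑ i, μ.real (S ∩ g ⁻¹' {i}) * f i := by
  have hdisj : Pairwise (Disjoint on fun i => S ∩ g ⁻¹' {i}) := fun i i' h =>
    (pairwise_disjoint_fiber g h).mono inter_subset_right inter_subset_right
  have hfin : ∀ i, μ (S ∩ g ⁻¹' {i}) ≠ ⊤ := fun i =>
    ((measure_mono inter_subset_left).trans_lt hS.lt_top).ne
  have hconst : ∀ i, EqOn (fun t => f (g t)) (fun _ => f i) (S ∩ g ⁻¹' {i}) :=
    fun i t ht => congrArg f ht.2
  conv_lhs => rw [← iUnion_inter_preimage_singleton S g]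
  rw [integral_iUnion_fintype hm hdisj
    fun i => (integrableOn_const (hfin i)).congr_fun (hconst i).symm (hm i)]
  refine Finset.sum_congr rfl fun i _ => ?_
  rw [setIntegral_congr_fun (hm i) (hconst i), setIntegral_const, smul_eq_mul]

end Fibers

theorem Monotone.csSup_image_Iic {α β : Type*} [Preorder α] [ConditionallyCompleteLattice β]
    {f : α → β} (hf : Monotone f) (a : α) : sSup (f '' Iic a) = f a :=
  (hf.map_isGreatest isGreatest_Iic).csSup_eq

theorem sum_volume_real_fiber_le_of_subset_Icc {ι : Type*} (job : ℝ → Option ι) {F : Finset ι}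
    {a b : ℝ} (hm : ∀ j ∈ F, MeasurableSet {t | job t = some j})
    (hsub : ∀ j ∈ F, {t | job t = some j} ⊆ Icc a b) (hab : a ≤ b) :
    ∑ j ∈ F, volume.real {t | job t = some j} ≤ b - a := by
  have hdisj : (F : Set ι).PairwiseDisjoint fun j => {t | job t = some j} :=
    fun j _ j' _ h => disjoint_left.2 fun t ht ht' => h (Option.some_injective _ (ht.symm.trans ht'))
  have hfin : ∀ j ∈ F, volume {t | job t = some j} ≠ ⊤ := fun j hj =>
    ((measure_mono (hsub j hj)).trans_lt measure_Icc_lt_top).ne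
  rw [← measureReal_biUnion_finset hdisj hm hfin, ← Real.volume_real_Icc_of_le hab]
  exact measureReal_mono (iUnion₂_subset hsub) measure_Icc_lt_top.ne

theorem Set.Nonempty.of_setIntegral_ne_zero {α : Type*} [MeasurableSpace α] {μ : Measure α}
    {s : Set α} {f : α → ℝ} (h : ∫ t in s, f t ∂μ ≠ 0) : s.Nonempty :=
  nonempty_iff_ne_empty.2 fun hs => h (hs ▸ setIntegral_empty)

theorem sum_volume_real_fiber_le_completion_sub_release {n : ℕ} (job : ℝ → Option (Fin n))
    (r C : Fin n → ℝ) (hm : ∀ j, MeasurableSet {t | job t = some j})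
    (hrel : ∀ t j, job t = some j → r j ≤ t) (hC : ∀ j t, job t = some j → t ≤ C j)
    (hCmono : Monotone C) {j j' : Fin n} (hne : {t | job t = some j}.Nonempty)
    (hr : r j' ≤ r j) :
    ∑ j'' ∈ Finset.univ.filter (fun j'' => j'' ≤ j ∧ r j' ≤ r j''),
      volume.real {t | job t = some j''} ≤ C j - r j' := by
  obtain ⟨t, ht⟩ := hne
  refine sum_volume_real_fiber_le_of_subset_Icc job (fun j'' _ => hm j'')
    (fun j'' hj'' t ht => ?_) (hr.trans ((hrel t j ht).trans (hC j t ht)))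
  obtain ⟨hj, hrj⟩ := (Finset.mem_filter.1 hj'').2
  exact ⟨hrj.trans (hrel t j'' ht), (hC j'' t ht).trans (hCmono hj)⟩

theorem stmt_16_general (n k : ℕ)
    (r v : Fin n → ℝ) (s P : Fin k → ℝ)
    (hv : ∀ j, 0 < v j) (hs : ∀ i, 0 < s i)
    (x E : Fin n → Fin k → ℝ)
    (hx : ∀ j i, x j i = v j / s i) (hE : ∀ j i, E j i = x j i * P i)
    (job : ℝ → Option (Fin n)) (spd : ℝ → Fin k)
    (hmeas : ∀ (j : Fin n) (i : Fin k),
      MeasurableSet {t : ℝ | job t = some j ∧ spd t = i})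
    (hbdd : ∀ j : Fin n, Bornology.IsBounded {t : ℝ | job t = some j})
    (hrel : ∀ (t : ℝ) (j : Fin n), job t = some j → r j ≤ t)
    (hvol : ∀ j : Fin n, (∫ t in {t : ℝ | job t = some j}, s (spd t)) = v j)
    (C : Fin n → ℝ) (hCdef : ∀ j, C j = sSup {t : ℝ | job t = some j})
    (hCmono : Monotone C)
    (Chat : Fin n → ℝ) (hChat : ∀ j, Chat j = sSup (C '' {j' | j' ≤ j}))
    (xproc Eproc : Fin n → ℝ)
    (hxproc : ∀ j, xproc j = (volume {t : ℝ | job t = some j}).toReal)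
    (hEproc : ∀ j, Eproc j = ∫ t in {t : ℝ | job t = some j}, P (spd t)) :
    ∃ lam : Fin n → Fin k → ℝ,
      (∀ j i, 0 ≤ lam j i) ∧
      (∀ j, ∑ i, lam j i = 1) ∧
      (∀ j, ∑ i, lam j i * x j i = xproc j) ∧
      (∀ j, ∑ i, lam j i * E j i = Eproc j) ∧
      (∀ j j' : Fin n, j' ≤ j → Chat j' ≤ Chat j) ∧
      (∀ j j' : Fin n, j' ≤ j → r j' ≤ r j →
        Chat j ≥ r j' +
          ∑ j'' ∈ Finset.univ.filter (fun j'' : Fin n => j'' ≤ j ∧ r j' ≤ r j''),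
            ∑ i, lam j'' i * x j'' i) := by
  set a : Fin n → Fin k → ℝ := fun j i => volume.real ({t | job t = some j} ∩ spd ⁻¹' {i})
  have hint (j : Fin n) (f : Fin k → ℝ) :
      ∫ t in {t | job t = some j}, f (spd t) = ∑ i, a j i * f i :=
    setIntegral_comp_eq_sum_measureReal (S := {t | job t = some j}) (g := spd) (hmeas j)
      (hbdd j).measure_lt_top.ne f
  have hxa (j : Fin n) : xproc j = ∑ i, a j i := by
    rw [hxproc, ← measureReal_def]
    simpa [setIntegral_const] using hint j 1
  have hx_share (j : Fin n) (i : Fin k) : s i * a j i / v j * x j i = a j i := by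
    rw [hx]; field_simp [(hs i).ne', (hv j).ne']
  have hChatC (j : Fin n) : Chat j = C j := (hChat j).trans (hCmono.csSup_image_Iic j)
  refine ⟨fun j i => s i * a j i / v j, fun j i => ?_, fun j => ?_, fun j => ?_, fun j => ?_,
    fun j j' h => ?_, fun j j' _ hr => ?_⟩
  · exact div_nonneg (mul_nonneg (hs i).le measureReal_nonneg) (hv j).le
  · simp_rw [← Finset.sum_div, mul_comm (s _), ← hint, hvol, div_self (hv j).ne']
  · simp_rw [hx_share, hxa]
  · rw [hEproc, hint]
    simp_rw [hE, ← mul_assoc, hx_share]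
  · simpa only [hChatC] using hCmono h
  · have hbusy := sum_volume_real_fiber_le_completion_sub_release job r C
      (fun j => MeasurableSet.of_inter_preimage_singleton (g := spd) (hmeas j)) hrel
      (fun j t ht => hCdef j ▸ le_csSup (hbdd j).bddAbove ht) hCmono
      (Set.Nonempty.of_setIntegral_ne_zero ((hvol j).trans_ne (hv j).ne')) hr
    simp_rw [hx_share, ← hxa, hxproc, ← measureReal_def, hChatC]
    linarith

/-- Lemma: schedule ⟹ feasible LP solution. Jobs `1,…,n` have
release times `r`, weights `w`, volumes `v > 0`; the processor has speeds
`s i > 0` with powers `P i`, and `x j i = v j / s i`, `E j i = x j i * P i`.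
A feasible schedule is given by `job : ℝ → Option (Fin n)` (which job runs at
time `t`, `none` = idle) and `spd : ℝ → Fin k` (speed level at time `t`), which
never processes a job before its release and fully processes every volume; its
completion times are `C j = sSup X_j`, its extended completion times are
`Ĉ j = sSup {C j' | j' ≤ j}`, and it respects the completion ordering
(`C` monotone). Then there is `λ : Fin n → Fin k → ℝ` such that, together with
the extended completion times `Ĉ`, all LP constraints hold and moreover
`Σ_i λ j i · x j i = x_j(σ)` and `Σ_i λ j i · E j i = E_j(σ)` for all `j`. -/
theorem stmt_16 (n k : ℕ)
    (r w v : Fin n → ℝ) (s P : Fin k → ℝ)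
    (hv : ∀ j, 0 < v j) (hs : ∀ i, 0 < s i)
    (x E : Fin n → Fin k → ℝ)
    (hx : ∀ j i, x j i = v j / s i) (hE : ∀ j i, E j i = x j i * P i)
    (job : ℝ → Option (Fin n)) (spd : ℝ → Fin k)
    (hmeas : ∀ (j : Fin n) (i : Fin k),
      MeasurableSet {t : ℝ | job t = some j ∧ spd t = i})
    (hbdd : ∀ j : Fin n, Bornology.IsBounded {t : ℝ | job t = some j})
    (hrel : ∀ (t : ℝ) (j : Fin n), job t = some j → r j ≤ t)
    (hvol : ∀ j : Fin n, (∫ t in {t : ℝ | job t = some j}, s (spd t)) = v j)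
    (C : Fin n → ℝ) (hCdef : ∀ j, C j = sSup {t : ℝ | job t = some j})
    (hCmono : Monotone C)
    (Chat : Fin n → ℝ) (hChat : ∀ j, Chat j = sSup (C '' {j' | j' ≤ j}))
    (xproc Eproc : Fin n → ℝ)
    (hxproc : ∀ j, xproc j = (volume {t : ℝ | job t = some j}).toReal)
    (hEproc : ∀ j, Eproc j = ∫ t in {t : ℝ | job t = some j}, P (spd t)) :
    ∃ lam : Fin n → Fin k → ℝ,
      (∀ j i, 0 ≤ lam j i) ∧
      (∀ j, ∑ i, lam j i = 1) ∧
      (∀ j, ∑ i, lam j i * x j i = xproc j) ∧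
      (∀ j, ∑ i, lam j i * E j i = Eproc j) ∧
      (∀ j j' : Fin n, j' ≤ j → Chat j' ≤ Chat j) ∧
      (∀ j j' : Fin n, j' ≤ j → r j' ≤ r j →
        Chat j ≥ r j' +
          ∑ j'' ∈ Finset.univ.filter (fun j'' : Fin n => j'' ≤ j ∧ r j' ≤ r j''),
            ∑ i, lam j'' i * x j'' i) :=
  stmt_16_general n k r v s P hv hs x E hx hE job spd hmeas hbdd hrel hvol C hCdef hCmono Chat hChat
    xproc Eproc hxproc hEproc
end
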